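/- arXiv:2302.01687 — 2 statements merged into one kernel-verified Lean document; each statement's English description precedes it below -/
import Mathlib

section
/- Suppose F̃, P_F, P_B satisfy the FL-DB constraint F̃(s)·P_F(s'|s) = F̃(s')·P_B(s|s')·exp(−E(s→s')) on all edges of a finite DAG, where E(s→s') = E(s') − E(s), and suppose E(x) is such that exp(−E(x))·F̃(x) = R(x) for terminal x. Then the forward policy samples terminal states proportionally to R, i.e., P_F^⊤(x) = R(x)/Σ_{x'} R(x') for all terminal x. -/
/-- Product of the transition values `P s_{i-1} s_i` along a list of states. -/
def pathProd {S : Type*} (P : S → S → ℝ) (l : List S) : ℝ :=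
  ((l.zip l.tail).map fun p => P p.1 p.2).prod

/-- The complete trajectories from `s0` to `x`. -/
def Traj {S : Type*} (A : S → S → Prop) (s0 x : S) : Type _ :=
  {l : List S // l.Chain' A ∧ l.head? = some s0 ∧ l.getLast? = some x}

section Stmt8Aux

variable {S : Type*}

@[simp] lemma pathProd_nil (P : S → S → ℝ) : pathProd P [] = 1 := rfl

@[simp] lemma pathProd_singleton (P : S → S → ℝ) (a : S) : pathProd P [a] = 1 := rfl

@[simp] lemma pathProd_cons_cons (P : S → S → ℝ) (a b : S) (l : List S) :
    pathProd P (a :: b :: l) = P a b * pathProd P (b :: l) := by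
  simp [pathProd]

lemma pathProd_append (P : S → S → ℝ) (l₁ l₂ : List S) (h₁ : l₁ ≠ []) (h₂ : l₂ ≠ []) :
    pathProd P (l₁ ++ l₂)
      = pathProd P l₁ * P (l₁.getLast h₁) (l₂.head h₂) * pathProd P l₂ := by
  induction l₁ with
  | nil => exact absurd rfl h₁
  | cons a l ih =>
    cases l with
    | nil =>
      obtain ⟨c, r, rfl⟩ : ∃ c r, l₂ = c :: r := ⟨l₂.head h₂, l₂.tail, (List.cons_head_tail h₂).symm⟩
      simp
    | cons b r =>
      have := ih (by simp)
      simp only [List.cons_append] at *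
      rw [pathProd_cons_cons, this, pathProd_cons_cons]
      simp [List.getLast]
      ring

lemma pathProd_reverse (P : S → S → ℝ) (l : List S) :
    pathProd P l.reverse = pathProd (flip P) l := by
  induction l with
  | nil => rfl
  | cons a l ih =>
    rcases eq_or_ne l [] with rfl | hl
    · rfl
    · have hrev : l.reverse ≠ [] := by simpa using hl
      rw [List.reverse_cons, pathProd_append P l.reverse [a] hrev (by simp)]
      cases l with
      | nil => exact absurd rfl hl
      | cons b r =>
        rw [pathProd_cons_cons]
        simp only [List.head_cons, List.getLast_reverse, pathProd_singleton, ih]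
        simp [flip]
        ring

lemma chain_transGen {A : S → S → Prop} {a c : S} {m : List S}
    (h : List.Chain A a m) (hm : m.getLast? = some c) : Relation.TransGen A a c := by
  induction m generalizing a with
  | nil => simp at hm
  | cons b m ih =>
    obtain ⟨hab, hm'⟩ := List.isChain_cons_cons.mp h
    cases m with
    | nil => simp at hm; subst hm; exact Relation.TransGen.single hab
    | cons d r => exact (ih hm' (by simpa using hm)).head hab

lemma traj_nodup {A : S → S → Prop} (hacyc : ∀ s, ¬ Relation.TransGen A s s)
    {l : List S} (h : l.Chain' A) : l.Nodup := by
  have h' : l.Chain' (Relation.TransGen A) := h.imp fun a b hab => Relation.TransGen.single hab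
  haveI : IsTrans S (Relation.TransGen A) := ⟨fun _ _ _ => Relation.TransGen.trans⟩
  have hp := List.isChain_iff_pairwise.mp h'
  exact hp.imp fun hab => by rintro rfl; exact hacyc _ hab

lemma traj_finite [Fintype S] {A : S → S → Prop} (hacyc : ∀ s, ¬ Relation.TransGen A s s)
    (s0 x : S) : Finite (Traj A s0 x) := by
  have hsub : {l : List S | l.Chain' A ∧ l.head? = some s0 ∧ l.getLast? = some x}
      ⊆ {l : List S | l.length ≤ Fintype.card S} :=
    fun l hl => (traj_nodup hacyc hl.1).length_le_card
  exact ((List.finite_length_le S (Fintype.card S)).subset hsub).to_subtype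

/-- Reversal equivalence. -/
def trajReverse {A : S → S → Prop} (a b : S) : Traj A a b ≃ Traj (flip A) b a where
  toFun τ := ⟨τ.1.reverse, by
    obtain ⟨l, h1, h2, h3⟩ := τ
    exact ⟨List.isChain_reverse.mpr h1, by simpa using h3, by simpa using h2⟩⟩
  invFun τ := ⟨τ.1.reverse, by
    obtain ⟨l, h1, h2, h3⟩ := τ
    exact ⟨List.isChain_reverse.mpr h1, by simpa using h3, by simpa using h2⟩⟩
  left_inv τ := by simp; rfl
  right_inv τ := by simp; rfl

section rec

variable {B : S → S → Prop}

lemma traj_base (hacyc : ∀ s, ¬ Relation.TransGen B s s) (u : S) (Q : S → S → ℝ)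
    [Fintype (Traj B u u)] :
    (∑' τ : Traj B u u, pathProd Q τ.1) = 1 := by
  have huniq : ∀ τ : Traj B u u, τ = (⟨[u], List.isChain_singleton u, rfl, rfl⟩ : Traj B u u) := by
    rintro ⟨l, hc, hh, hl⟩
    apply Subtype.ext
    cases l with
    | nil => simp at hh
    | cons a m =>
      obtain rfl : u = a := by simpa using hh.symm
      cases m with
      | nil => rfl
      | cons b r =>
        exact absurd (chain_transGen hc (by simpa using hl)) (hacyc u)
  haveI : Unique (Traj B u u) := ⟨⟨_⟩, huniq⟩
  rw [tsum_fintype, Fintype.sum_unique, huniq default]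
  rfl

/-- prepend `t` to a trajectory starting at a child of `t`. -/
def consTraj {t u : S} (p : Σ s : {s // B t s}, Traj B s u) : Traj B t u :=
  ⟨t :: p.2.1, by
    obtain ⟨⟨s, hs⟩, ⟨l, hc, hh, hl⟩⟩ := p
    cases l with
    | nil => simp at hh
    | cons c r =>
      obtain rfl : c = s := by simpa using hh
      exact ⟨List.isChain_cons.mpr ⟨by simp [hs], hc⟩, rfl, by simpa using hl⟩⟩

lemma traj_step [Fintype S] [DecidableRel B] {t u : S} (hne : t ≠ u)
    [Fintype (Traj B t u)] [∀ s, Fintype (Traj B s u)] (Q : S → S → ℝ) :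
    (∑' τ : Traj B t u, pathProd Q τ.1)
      = ∑ s ∈ Finset.univ.filter (fun s => B t s),
          Q t s * ∑' τ : Traj B s u, pathProd Q τ.1 := by
  simp only [tsum_fintype]
  have hbij : Function.Bijective (consTraj (B := B) (t := t) (u := u)) := by
    constructor
    · rintro ⟨⟨s₁, h₁⟩, ⟨l₁, hc₁, hh₁, hl₁⟩⟩ ⟨⟨s₂, h₂⟩, ⟨l₂, hc₂, hh₂, hl₂⟩⟩ h
      have hll : l₁ = l₂ := by
        simpa [consTraj] using congrArg (fun τ : Traj B t u => τ.1) h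
      subst hll
      have hss : s₁ = s₂ := by rw [hh₁] at hh₂; exact (Option.some_inj.mp hh₂)
      subst hss
      rfl
    · rintro ⟨l, hc, hh, hl⟩
      cases l with
      | nil => simp at hh
      | cons a m =>
        obtain rfl : t = a := by simpa using hh.symm
        cases m with
        | nil =>
          exact absurd (by simpa using hl) hne
        | cons c r =>
          have hcc : List.Chain B t (c :: r) := hc
          obtain ⟨htc, hcr⟩ := List.isChain_cons_cons.mp hcc
          exact ⟨⟨⟨c, htc⟩, ⟨c :: r, hcr, rfl, by simpa using hl⟩⟩, rfl⟩
  have key : ∑ p : (Σ s : {s // B t s}, Traj B s u), Q t p.1.1 * pathProd Q p.2.1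
      = ∑ τ : Traj B t u, pathProd Q τ.1 := by
    apply Fintype.sum_bijective _ hbij
    rintro ⟨⟨s, hs⟩, ⟨l, hc, hh, hl⟩⟩
    cases l with
    | nil => simp at hh
    | cons c r =>
      obtain rfl : c = s := by simpa using hh
      simp [consTraj]
  rw [← key]
  rw [Finset.sum_subtype (p := fun s => B t s) (F := Fintype.ofFinite _) (Finset.univ.filter (fun s => B t s)) (by simp)
    (fun s => Q t s * ∑ τ : Traj B s u, pathProd Q τ.1)]
  have huniv : (Finset.univ : Finset (Σ s : {s // B t s}, Traj B s u))
      = Finset.univ.sigma (fun _ => Finset.univ) := by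
    ext ⟨a, b⟩; simp
  rw [huniv, Finset.sum_sigma]
  simp only [Finset.mul_sum]
  congr!

end rec
end Stmt8Aux

/-- Suppose `F̃, P_F, P_B` satisfy the FL-DB constraint
`F̃(s)·P_F(s'|s) = F̃(s')·P_B(s|s')·exp(−(E(s')−E(s)))` on all edges of a finite DAG
with unique initial state `s0`, and `exp(−E(x))·F̃(x) = R(x)` for terminal `x`.  Then
the forward policy samples terminal states proportionally to `R`:
`P_F^⊤(x) = R(x) / Σ_{x'} R(x')` for all terminal `x`.  Here `PB s s' = P_B(s|s')`. -/
theorem stmt_8 {S : Type*} [Fintype S] [DecidableEq S]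
    (A : S → S → Prop) [DecidableRel A]
    (hacyc : ∀ s, ¬ Relation.TransGen A s s)
    (s0 : S) (hinit : ∀ s, ¬ A s s0)
    (huniq : ∀ s', (∀ s, ¬ A s s') → s' = s0)
    (E : S → ℝ) (Ftil : S → ℝ) (hFtil : ∀ s, 0 < Ftil s)
    (PF PB : S → S → ℝ)
    (hPFnonneg : ∀ s s', 0 ≤ PF s s')
    (hPFsupp : ∀ s s', ¬ A s s' → PF s s' = 0)
    (hPFsum : ∀ s, (∃ s', A s s') →
      ∑ s' ∈ Finset.univ.filter (fun s' => A s s'), PF s s' = 1)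
    (hPBnonneg : ∀ s s', 0 ≤ PB s s')
    (hPBsupp : ∀ s s', ¬ A s s' → PB s s' = 0)
    (hPBsum : ∀ s', (∃ s, A s s') →
      ∑ s ∈ Finset.univ.filter (fun s => A s s'), PB s s' = 1)
    (hFLDB : ∀ s s', A s s' →
      Ftil s * PF s s' = Ftil s' * PB s s' * Real.exp (-(E s' - E s)))
    (R : S → ℝ) (hRpos : ∀ x, (∀ s', ¬ A x s') → 0 < R x)
    (hRterm : ∀ x, (∀ s', ¬ A x s') → Real.exp (-E x) * Ftil x = R x)
    (x : S) (hx : ∀ s', ¬ A x s') :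
    (∑' τ : Traj A s0 x, pathProd PF τ.1)
      = R x / ∑ x' ∈ Finset.univ.filter (fun x' => ∀ s', ¬ A x' s'), R x' := by
  classical
  -- acyclicity of the flipped relation
  have hacyc' : ∀ s, ¬ Relation.TransGen (flip A) s s := by
    intro s hs
    exact hacyc s ((Relation.transGen_swap).mp hs)
  haveI instA : ∀ a b : S, Fintype (Traj A a b) :=
    fun a b => @Fintype.ofFinite _ (traj_finite hacyc a b)
  haveI instDF : DecidableRel (flip A) := fun a b => ‹DecidableRel A› b a
  haveI instF : ∀ a b : S, Fintype (Traj (flip A) a b) :=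
    fun a b => @Fintype.ofFinite _ (traj_finite hacyc' a b)
  -- reversal link
  have hrev : ∀ (P : S → S → ℝ) (t : S),
      (∑' τ : Traj A s0 t, pathProd P τ.1)
        = ∑' τ : Traj (flip A) t s0, pathProd (flip P) τ.1 := by
    intro P t
    rw [← Equiv.tsum_eq (trajReverse (A := A) s0 t)
      (fun τ : Traj (flip A) t s0 => pathProd (flip P) τ.1)]
    apply tsum_congr
    intro τ
    show pathProd P τ.1 = pathProd (flip P) τ.1.reverse
    rw [pathProd_reverse]
    rfl
  -- trajectory sums
  set SF : S → ℝ := fun t => ∑' τ : Traj A s0 t, pathProd PF τ.1 with hSF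
  set SB : S → ℝ := fun t => ∑' τ : Traj A s0 t, pathProd PB τ.1 with hSB
  -- base values
  have hSF0 : SF s0 = 1 := by
    rw [hSF]; simp only; rw [hrev PF s0]; exact traj_base hacyc' s0 _
  have hSB0 : SB s0 = 1 := by
    rw [hSB]; simp only; rw [hrev PB s0]; exact traj_base hacyc' s0 _
  -- recursion
  have hstep : ∀ (P : S → S → ℝ) (t : S), t ≠ s0 →
      (∑' τ : Traj A s0 t, pathProd P τ.1)
        = ∑ s ∈ Finset.univ.filter (fun s => A s t),
            P s t * ∑' τ : Traj A s0 s, pathProd P τ.1 := by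
    intro P t hts
    rw [hrev P t, traj_step (B := flip A) hts (flip P)]
    have hfilter : Finset.univ.filter (fun s => flip A t s)
        = Finset.univ.filter (fun s => A s t) := by
      ext s; simp only [Finset.mem_filter, Finset.mem_univ, true_and]; rfl
    rw [hfilter]
    refine Finset.sum_congr rfl fun s _ => ?_
    rw [hrev P s]
    rfl
  -- SB ≡ 1
  have hSB1 : ∀ t, SB t = 1 := by
    haveI : IsTrans S (Relation.TransGen A) := ⟨fun _ _ _ => Relation.TransGen.trans⟩
    haveI : IsIrrefl S (Relation.TransGen A) := ⟨hacyc⟩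
    have hwf : WellFounded (Relation.TransGen A) :=
      Finite.wellFounded_of_trans_of_irrefl _
    intro t
    induction t using hwf.induction with
    | _ t IH =>
      rcases eq_or_ne t s0 with rfl | hts
      · exact hSB0
      · have hpar : ∃ s, A s t := by
          by_contra h
          push_neg at h
          exact hts (huniq t h)
        rw [hSB]
        simp only
        rw [hstep PB t hts]
        have : ∀ s ∈ Finset.univ.filter (fun s => A s t),
            PB s t * (∑' τ : Traj A s0 s, pathProd PB τ.1) = PB s t := by
          intro s hs
          have hAst : A s t := by simpa using hs
          have := IH s (Relation.TransGen.single hAst)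
          rw [hSB] at this
          simp only at this
          rw [this, mul_one]
        rw [Finset.sum_congr rfl this]
        exact hPBsum t hpar
  -- the pathwise identity
  set G : S → ℝ := fun s => Ftil s * Real.exp (-(E s)) with hG
  have hGpos : ∀ s, 0 < G s := fun s => mul_pos (hFtil s) (Real.exp_pos _)
  have hedge : ∀ s s', A s s' → G s * PF s s' = G s' * PB s s' := by
    intro s s' h
    have h1 := hFLDB s s' h
    have h2 : Real.exp (-(E s' - E s)) * Real.exp (-(E s)) = Real.exp (-(E s')) := by
      rw [← Real.exp_add]; ring_nf
    calc G s * PF s s' = (Ftil s * PF s s') * Real.exp (-(E s)) := by rw [hG]; ring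
      _ = Ftil s' * PB s s' * (Real.exp (-(E s' - E s)) * Real.exp (-(E s))) := by
          rw [h1]; ring
      _ = G s' * PB s s' := by rw [h2, hG]; ring
  have hpath : ∀ (l : List S) (a c : S), l.Chain' A → l.head? = some a →
      l.getLast? = some c → G a * pathProd PF l = G c * pathProd PB l := by
    intro l
    induction l with
    | nil => intro a c _ h _; simp at h
    | cons b m ih =>
      intro a c hc hh hl
      have hba : b = a := by simpa using hh
      subst hba
      cases m with
      | nil =>
        have hbc : b = c := by simpa using hl
        subst hbc
        rfl
      | cons d r =>
        have hchain : List.Chain A b (d :: r) := hc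
        obtain ⟨had, hdr⟩ := List.isChain_cons_cons.mp hchain
        have ihd := ih d c hdr rfl (by simpa using hl)
        rw [pathProd_cons_cons, pathProd_cons_cons, ← mul_assoc,
          hedge b d had]
        calc G d * PB b d * pathProd PF (d :: r)
            = PB b d * (G d * pathProd PF (d :: r)) := by ring
          _ = PB b d * (G c * pathProd PB (d :: r)) := by rw [ihd]
          _ = G c * (PB b d * pathProd PB (d :: r)) := by ring
  -- SF t = G t / G s0
  have hSFval : ∀ t, SF t = G t / G s0 := by
    intro t
    have : ∀ τ : Traj A s0 t, pathProd PF τ.1 = (G t / G s0) * pathProd PB τ.1 := by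
      rintro ⟨l, hc, hh, hl⟩
      have h0 := hpath l s0 t hc hh hl
      rw [div_mul_eq_mul_div, eq_div_iff (hGpos s0).ne']
      linarith [h0]
    rw [hSF]
    simp only
    rw [tsum_congr this, tsum_mul_left]
    have : (∑' τ : Traj A s0 t, pathProd PB τ.1) = SB t := rfl
    rw [this, hSB1 t, mul_one]
  -- flow conservation : total terminating mass is 1
  have hrecU : ∀ t, t ≠ s0 → SF t = ∑ s : S, SF s * PF s t := by
    intro t hts
    rw [hSF]; simp only
    rw [hstep PF t hts]
    rw [← Finset.sum_subset (Finset.filter_subset (fun s => A s t) Finset.univ)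
      (fun s _ hns => by
        have : ¬ A s t := by simpa using hns
        rw [hPFsupp s t this, mul_zero])]
    refine Finset.sum_congr rfl fun s _ => ?_
    rw [mul_comm]
  have hinner : ∀ s' : S, ∑ t : S, SF t * PF t s'
      = SF s' - (if s' = s0 then SF s' else 0) := by
    intro s'
    rcases eq_or_ne s' s0 with rfl | hne
    · have : ∀ t : S, SF t * PF t s' = 0 := fun t => by
        rw [hPFsupp t s' (hinit t), mul_zero]
      simp [this]
    · rw [if_neg hne, sub_zero, ← hrecU s' hne]
  have hout : ∀ t : S, (∑ s' : S, PF t s') = if (∀ s', ¬ A t s') then 0 else 1 := by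
    intro t
    split_ifs with h
    · exact Finset.sum_eq_zero fun s' _ => hPFsupp t s' (h s')
    · push_neg at h
      rw [← hPFsum t h]
      exact (Finset.sum_subset (Finset.filter_subset _ _)
        (fun s' _ hns => hPFsupp t s' (by simpa using hns))).symm
  have hdouble : ∑ t : S, ∑ s' : S, SF t * PF t s' = ∑ s' : S, ∑ t : S, SF t * PF t s' :=
    Finset.sum_comm
  have hL : ∑ t : S, ∑ s' : S, SF t * PF t s'
      = ∑ t : S, (if (∀ s', ¬ A t s') then 0 else SF t) := by
    refine Finset.sum_congr rfl fun t _ => ?_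
    rw [← Finset.mul_sum, hout t]
    split_ifs <;> ring
  have hR : ∑ s' : S, ∑ t : S, SF t * PF t s' = (∑ s' : S, SF s') - SF s0 := by
    rw [Finset.sum_congr rfl fun s' _ => hinner s']
    rw [Finset.sum_sub_distrib]
    congr 1
    simp
  have hterm1 : ∑ x' ∈ Finset.univ.filter (fun x' => ∀ s', ¬ A x' s'), SF x' = 1 := by
    have e1 : ∑ t : S, (if (∀ s', ¬ A t s') then (0:ℝ) else SF t)
        = (∑ t : S, SF t) - ∑ x' ∈ Finset.univ.filter (fun x' => ∀ s', ¬ A x' s'), SF x' := by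
      rw [Finset.sum_filter]
      rw [← Finset.sum_sub_distrib]
      refine Finset.sum_congr rfl fun t _ => ?_
      split_ifs <;> ring
    have := hL.symm.trans (hdouble.trans hR)
    rw [e1, hSF0] at this
    linarith
  -- conclude
  have hsumR : ∑ x' ∈ Finset.univ.filter (fun x' => ∀ s', ¬ A x' s'), R x' = G s0 := by
    have : ∀ x' ∈ Finset.univ.filter (fun x' => ∀ s', ¬ A x' s'), R x' = SF x' * G s0 := by
      intro x' hx'
      have hterm : ∀ s', ¬ A x' s' := by simpa using hx'
      rw [hSFval x', div_mul_cancel₀ _ (hGpos s0).ne', hG]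
      rw [← hRterm x' hterm]
      ring
    rw [Finset.sum_congr rfl this, ← Finset.sum_mul, hterm1, one_mul]
  show SF x = _
  rw [hSFval x, hsumR]
  have hGx : G x = R x := by rw [hG, ← hRterm x hx]; ring
  rw [hGx]
end

section
/- Under detailed balance in a finite DAG, for any state s the flow satisfies F(s) = Σ_{x ∈ X, x ≥ s} P_B(s reached from x)·F(x), where P_B(s reached from x) := Σ over directed paths from s to x of the product of backward transition probabilities along the reversed path; i.e., the flow at s equals the expected terminal reward weighted by the backward-policy probability of passing through s. -/
/-- The directed paths from `s` to `x` in the DAG with edges `A`. -/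
def Paths {S : Type*} (A : S → S → Prop) (s x : S) : Type _ :=
  {l : List S // l.Chain' A ∧ l.head? = some s ∧ l.getLast? = some x}

set_option linter.unusedSectionVars false
set_option linter.unusedVariables false

private lemma pathProd_cons {S : Type*} (P : S → S → ℝ) (a b : S) (t : List S) :
    pathProd P (a :: b :: t) = P a b * pathProd P (b :: t) := by
  simp [pathProd]

section
variable {S : Type*} [Fintype S] [DecidableEq S] {A : S → S → Prop}

private lemma nodup_of_chain' (hacyc : ∀ s, ¬ Relation.TransGen A s s)
    {l : List S} (hl : l.Chain' A) : l.Nodup := by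
  have h2 : l.Pairwise (Relation.TransGen A) :=
    List.isChain_iff_pairwise.mp (hl.imp fun _ _ h => Relation.TransGen.single h)
  refine h2.imp ?_
  intro a b h he
  exact hacyc b (he ▸ h)

private lemma paths_finite (hacyc : ∀ s, ¬ Relation.TransGen A s s) (s x : S) :
    Finite (Paths A s x) := by
  have hinj : Function.Injective
      (fun p : Paths A s x => (⟨p.1, nodup_of_chain' hacyc p.2.1⟩ : {l : List S // l.Nodup})) := by
    intro p q h
    apply Subtype.ext
    simpa using h
  exact Finite.of_injective _ hinj

private lemma tsum_paths_self (PB : S → S → ℝ) (t : S) (hterm : ∀ s', ¬ A t s') :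
    (∑' l : Paths A t t, pathProd PB l.1) = 1 := by
  have h1 : ∀ p : Paths A t t, p.1 = [t] := by
    rintro ⟨l, hc, hh, hl⟩
    obtain ⟨r, rfl⟩ : ∃ r, l = t :: r := by
      cases l with
      | nil => simp at hh
      | cons a r => exact ⟨r, by injection hh with h; rw [h]⟩
    cases r with
    | nil => rfl
    | cons a r' => exact absurd (List.isChain_cons_cons.mp hc).1 (hterm a)
  have pd : Paths A t t := ⟨[t], List.isChain_singleton t, by simp, by simp⟩
  rw [tsum_eq_single pd (fun b hb => absurd (by apply Subtype.ext; rw [h1 b, h1 pd]) hb)]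
  rw [show pd.1 = [t] from h1 pd]
  simp [pathProd]

private lemma tsum_paths_cons [DecidableRel A] (hacyc : ∀ s, ¬ Relation.TransGen A s s)
    (PB : S → S → ℝ) (s x : S) (hsx : s ≠ x) :
    (∑' l : Paths A s x, pathProd PB l.1)
      = ∑ s' ∈ Finset.univ.filter (fun s' => A s s'),
          PB s s' * ∑' l : Paths A s' x, pathProd PB l.1 := by
  haveI : ∀ y z, Finite (Paths A y z) := fun y z => paths_finite hacyc y z
  let g : (Σ s' : {s' // A s s'}, Paths A s'.1 x) → Paths A s x := fun q =>
    ⟨s :: q.2.1, by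
      obtain ⟨⟨s', hA⟩, ⟨l, hc, hh, hl⟩⟩ := q
      refine ⟨List.isChain_cons.mpr ⟨fun y hy => ?_, hc⟩, rfl, ?_⟩
      · rw [hh] at hy; rw [Option.mem_some_iff] at hy; subst hy; exact hA
      · obtain ⟨a, r, rfl⟩ : ∃ a r, l = a :: r := by
          cases l with
          | nil => simp at hh
          | cons a r => exact ⟨a, r, rfl⟩
        simpa using hl⟩
  have hbij : Function.Bijective g := by
    constructor
    · rintro ⟨⟨s1, h1⟩, ⟨l1, hc1, hh1, hl1⟩⟩ ⟨⟨s2, h2⟩, ⟨l2, hc2, hh2, hl2⟩⟩ h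
      have hl : l1 = l2 := by
        have := congrArg Subtype.val h
        simpa [g] using this
      subst hl
      have : s1 = s2 := by rw [hh1] at hh2; injection hh2
      subst this
      rfl
    · rintro ⟨l, hc, hh, hl⟩
      obtain ⟨r, rfl⟩ : ∃ r, l = s :: r := by
        cases l with
        | nil => simp at hh
        | cons a r => exact ⟨r, by injection hh with h; rw [h]⟩
      obtain ⟨a, r', rfl⟩ : ∃ a r', r = a :: r' := by
        cases r with
        | nil => exact absurd (by simpa using hl) hsx
        | cons a r' => exact ⟨a, r', rfl⟩
      have hA : A s a := (List.isChain_cons_cons.mp hc).1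
      refine ⟨⟨⟨a, hA⟩, ⟨a :: r', (List.isChain_cons_cons.mp hc).2, rfl, by simpa using hl⟩⟩, rfl⟩
  rw [← (Equiv.ofBijective g hbij).tsum_eq (fun p : Paths A s x => pathProd PB p.1)]
  have : ∀ q : (Σ s' : {s' // A s s'}, Paths A s'.1 x),
      pathProd PB (g q).1 = PB s q.1.1 * pathProd PB q.2.1 := by
    rintro ⟨⟨s', hA⟩, ⟨l, hc, hh, hl⟩⟩
    obtain ⟨r, rfl⟩ : ∃ r, l = s' :: r := by
      cases l with
      | nil => simp at hh
      | cons a r => exact ⟨r, by injection hh with h; rw [h]⟩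
    exact pathProd_cons PB s s' r
  calc (∑' q : (Σ s' : {s' // A s s'}, Paths A s'.1 x), pathProd PB (g q).1)
      = ∑' q : (Σ s' : {s' // A s s'}, Paths A s'.1 x), PB s q.1.1 * pathProd PB q.2.1 :=
        tsum_congr this
    _ = ∑' (s' : {s' // A s s'}) (l : Paths A s'.1 x), PB s s'.1 * pathProd PB l.1 :=
        Summable.tsum_sigma (Summable.of_finite)
    _ = ∑' (s' : {s' // A s s'}), PB s s'.1 * ∑' l : Paths A s'.1 x, pathProd PB l.1 := by
        exact tsum_congr fun s' => tsum_mul_left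
    _ = ∑ s' : {s' // A s s'}, PB s s'.1 * ∑' l : Paths A s'.1 x, pathProd PB l.1 :=
        tsum_fintype _
    _ = ∑ s' ∈ Finset.univ.filter (fun s' => A s s'),
          PB s s' * ∑' l : Paths A s' x, pathProd PB l.1 :=
        (Finset.sum_subtype (Finset.univ.filter (fun s' => A s s'))
          (fun y => by simp)
          (fun s' => PB s s' * ∑' l : Paths A s' x, pathProd PB l.1)).symm

end

/-- Under detailed balance in a finite DAG, for any state `s` the flow
satisfies `F(s) = Σ_{x ∈ X, x ≥ s} P_B(s reached from x)·F(x)`, where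
`P_B(s reached from x)` is the sum over directed paths from `s` to `x` of the product
of backward transition probabilities `∏ P_B(s_{i−1}|s_i)` along the path: the flow at
`s` equals the expected terminal reward weighted by the backward-policy probability of
passing through `s`.  Here `PB s s' = P_B(s|s')` and `F x = R x` on terminal `x`. -/
theorem stmt_11 {S : Type*} [Fintype S] [DecidableEq S]
    (A : S → S → Prop) [DecidableRel A]
    (hacyc : ∀ s, ¬ Relation.TransGen A s s)
    (F : S → ℝ) (hFpos : ∀ s, 0 < F s)
    (PF PB : S → S → ℝ)
    (hPFsum : ∀ s, (∃ s', A s s') →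
      ∑ s' ∈ Finset.univ.filter (fun s' => A s s'), PF s s' = 1)
    (hPBsum : ∀ s', (∃ s, A s s') →
      ∑ s ∈ Finset.univ.filter (fun s => A s s'), PB s s' = 1)
    (hDB : ∀ s s', A s s' → F s * PF s s' = F s' * PB s s')
    (R : S → ℝ) (hR : ∀ x, (∀ s', ¬ A x s') → F x = R x)
    (s : S) :
    F s = ∑ x ∈ Finset.univ.filter (fun x => ∀ s', ¬ A x s'),
      (∑' l : Paths A s x, pathProd PB l.1) * F x := by
  have wf : WellFounded (Function.swap A) := by
    have h1 : WellFounded (Relation.TransGen (Function.swap A)) := by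
      haveI : IsIrrefl S (Relation.TransGen (Function.swap A)) :=
        ⟨fun a h => hacyc a (Relation.transGen_swap.mp h)⟩
      exact Finite.wellFounded_of_trans_of_irrefl _
    exact Subrelation.wf (fun h => Relation.TransGen.single h) h1
  refine wf.induction (C := fun t => F t = ∑ x ∈ Finset.univ.filter (fun x => ∀ s', ¬ A x s'),
      (∑' l : Paths A t x, pathProd PB l.1) * F x) s ?_
  intro t IH
  by_cases hterm : ∀ s', ¬ A t s'
  · -- terminal case
    rw [Finset.sum_eq_single_of_mem t (by simp [hterm])]
    · rw [tsum_paths_self PB t hterm, one_mul]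
    · intro x hx hxt
      haveI : IsEmpty (Paths A t x) := by
        constructor
        rintro ⟨l, hc, hh, hl⟩
        obtain ⟨r, rfl⟩ : ∃ r, l = t :: r := by
          cases l with
          | nil => simp at hh
          | cons a r => exact ⟨r, by injection hh with h; rw [h]⟩
        cases r with
        | nil => exact hxt (by simpa using hl.symm)
        | cons a r' => exact hterm a (List.isChain_cons_cons.mp hc).1
      simp [tsum_empty]
  · -- nonterminal case
    push_neg at hterm
    have hne : ∀ x ∈ Finset.univ.filter (fun x => ∀ s', ¬ A x s'), t ≠ x := by
      intro x hx h
      obtain ⟨s', hs'⟩ := hterm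
      exact (Finset.mem_filter.mp hx).2 s' (h ▸ hs')
    calc F t = F t * ∑ s' ∈ Finset.univ.filter (fun s' => A t s'), PF t s' := by
          rw [hPFsum t hterm, mul_one]
      _ = ∑ s' ∈ Finset.univ.filter (fun s' => A t s'), F s' * PB t s' := by
          rw [Finset.mul_sum]
          exact Finset.sum_congr rfl fun s' hs' =>
            hDB t s' (by simpa using hs')
      _ = ∑ s' ∈ Finset.univ.filter (fun s' => A t s'),
            PB t s' * ∑ x ∈ Finset.univ.filter (fun x => ∀ s'', ¬ A x s''),
              (∑' l : Paths A s' x, pathProd PB l.1) * F x := by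
          refine Finset.sum_congr rfl fun s' hs' => ?_
          have hA : A t s' := by simpa using hs'
          rw [← IH s' hA, mul_comm]
      _ = ∑ x ∈ Finset.univ.filter (fun x => ∀ s'', ¬ A x s''),
            ∑ s' ∈ Finset.univ.filter (fun s' => A t s'),
              PB t s' * ((∑' l : Paths A s' x, pathProd PB l.1) * F x) := by
          rw [Finset.sum_comm]
          exact Finset.sum_congr rfl fun s' _ => Finset.mul_sum _ _ _
      _ = ∑ x ∈ Finset.univ.filter (fun x => ∀ s'', ¬ A x s''),
            (∑' l : Paths A t x, pathProd PB l.1) * F x := by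
          refine Finset.sum_congr rfl fun x hx => ?_
          rw [tsum_paths_cons hacyc PB t x (hne x hx), Finset.sum_mul]
          exact Finset.sum_congr rfl fun s' _ => (mul_assoc _ _ _).symm
end
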